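/- Let m be a monad with a LawfulMonad instance, and let g : m σ and s : σ → m PUnit satisfy the laws (GG): (do let x ← g; let y ← g; pure (x, y)) = (do let x ← g; pure (x, x)), and (GS): (do let x ← g; s x) = pure ⟨⟩. Then unused occurrences of g are discardable: for every k : m α, (do let _ ← g; k) = k. -/

import Mathlib

/-! Insert the no-op `x ← g; s x` after the unused `g`, merge the two reads of `g` by (GG),
and the remaining `x ← g; s x` is a no-op again by (GS). -/

universe u v

section GetSet

variable {m : Type u → Type v} [Monad m] [LawfulMonad m] {σ : Type u} {g : m σ}

theorem bind_get_bind_get_eq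
    (hGG : (do let x ← g; let y ← g; pure (x, y)) =
           ((do let x ← g; pure (x, x)) : m (σ × σ)))
    {β : Type u} (f : σ → σ → m β) :
    (do let x ← g; let y ← g; f x y) = (do let x ← g; f x x) := by
  simpa only [bind_assoc, pure_bind] using congrArg (· >>= fun p => f p.1 p.2) hGG

theorem bind_get_set_bind_eq {s : σ → m PUnit}
    (hGS : (do let x ← g; s x) = (pure PUnit.unit : m PUnit)) {α : Type u} (k : m α) :
    (do let x ← g; s x >>= fun _ => k) = k := by
  rw [← bind_assoc, hGS, pure_bind]

end GetSet

theorem unused_get_discardable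
    {m : Type u → Type v} [Monad m] [LawfulMonad m] {σ : Type u}
    (g : m σ) (s : σ → m PUnit)
    (hGG : (do let x ← g; let y ← g; pure (x, y)) =
           ((do let x ← g; pure (x, x)) : m (σ × σ)))
    (hGS : (do let x ← g; s x) = (pure PUnit.unit : m PUnit)) :
    ∀ {α : Type u} (k : m α), (do let _ ← g; k) = k := by
  intro α k
  calc (do let _ ← g; k)
      = (do let _ ← g; let y ← g; s y >>= fun _ => k) := by
        rw [bind_get_set_bind_eq hGS]
    _ = (do let x ← g; s x >>= fun _ => k) := bind_get_bind_get_eq hGG _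
    _ = k := bind_get_set_bind_eq hGS k
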